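/- arXiv:2504.17596 — 7 statements merged into one kernel-verified Lean document; each statement's English description precedes it below -/
import Mathlib

section
/- For all x ∈ R^N, 0 ≤ R(x) ≤ c^T α and R(x) ≤ D(x). -/
open Matrix

noncomputable def Dmap {N : ℕ} (Q : Matrix (Fin N) (Fin N) ℝ) (c α : Fin N → ℝ)
    (x : Fin N → ℝ) : ℝ :=
  x ⬝ᵥ Q.mulVec x - 2 * (c ⬝ᵥ x) + c ⬝ᵥ α

noncomputable def Rmap {N : ℕ} (Q : Matrix (Fin N) (Fin N) ℝ) (c α : Fin N → ℝ)
    (x : Fin N → ℝ) : ℝ :=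
  if 0 < c ⬝ᵥ x then c ⬝ᵥ α - (c ⬝ᵥ x) ^ 2 / (x ⬝ᵥ Q.mulVec x) else c ⬝ᵥ α

/-!
With `c = Q α`, write `s = cᵀx = xᵀQα`, `t = xᵀQx` and `a = cᵀα = αᵀQα ≥ 0`. Cauchy–Schwarz for
the semi-inner product `(u, v) ↦ uᵀQv` gives `s² ≤ t a`, hence `s²/t ≤ a`, which yields
`0 ≤ R(x) ≤ a`. The bound `R(x) ≤ D(x)` reduces to `2 s ≤ t + s²/t`, i.e. `(t - s)²/t ≥ 0`.
-/

theorem Matrix.PosSemidef.sq_dotProduct_mulVec_le {n R : Type*} [Fintype n] [CommRing R]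
    [LinearOrder R] [IsStrictOrderedRing R] [StarRing R] [TrivialStar R]
    {Q : Matrix n n R} (hQ : Q.PosSemidef) (x y : n → R) :
    (x ⬝ᵥ Q *ᵥ y) ^ 2 ≤ (x ⬝ᵥ Q *ᵥ x) * (y ⬝ᵥ Q *ᵥ y) := by
  classical
  have hnonneg (v : n → R) : 0 ≤ Q.toBilin' v v := by
    simpa [Matrix.toBilin'_apply'] using hQ.dotProduct_mulVec_nonneg v
  have hsymm : LinearMap.IsSymm Q.toBilin' := LinearMap.BilinForm.isSymm_iff.1 <|
    Matrix.isSymm_toBilin'_iff_isSymm.2 (isHermitian_iff_isSymm.1 hQ.1)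
  simpa only [Matrix.toBilin'_apply'] using Q.toBilin'.apply_sq_le_of_symm hnonneg hsymm x y

theorem two_mul_le_add_sq_div {K : Type*} [Field K] [LinearOrder K] [IsStrictOrderedRing K]
    {s t : K} (ht : 0 < t) : 2 * s ≤ t + s ^ 2 / t := by
  have h : 0 ≤ (t - s) ^ 2 / t := div_nonneg (sq_nonneg _) ht.le
  rw [show (t - s) ^ 2 / t = t - 2 * s + s ^ 2 / t by field_simp; ring] at h
  linarith

theorem stmt4_general {N : ℕ} (Q : Matrix (Fin N) (Fin N) ℝ) (hQ : Q.PosSemidef)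
    (α : Fin N → ℝ) (c : Fin N → ℝ) (hc : c = Q.mulVec α)
    (x : Fin N → ℝ) :
    0 ≤ Rmap Q c α x ∧ Rmap Q c α x ≤ c ⬝ᵥ α ∧ Rmap Q c α x ≤ Dmap Q c α x := by
  have hcα : c ⬝ᵥ α = α ⬝ᵥ Q *ᵥ α := by rw [hc, dotProduct_comm]
  have hcx : c ⬝ᵥ x = x ⬝ᵥ Q *ᵥ α := by rw [hc, dotProduct_comm]
  have ha : 0 ≤ c ⬝ᵥ α := by simpa [hcα] using hQ.dotProduct_mulVec_nonneg α
  have ht : 0 ≤ x ⬝ᵥ Q *ᵥ x := by simpa using hQ.dotProduct_mulVec_nonneg x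
  have hCS : (c ⬝ᵥ x) ^ 2 ≤ (x ⬝ᵥ Q *ᵥ x) * (c ⬝ᵥ α) := by
    rw [hcx, hcα]
    exact hQ.sq_dotProduct_mulVec_le x α
  unfold Rmap Dmap
  split_ifs with hs
  · have ht_pos : 0 < x ⬝ᵥ Q *ᵥ x := by
      refine lt_of_le_of_ne ht fun h ↦ ?_
      rw [← h, zero_mul] at hCS
      exact (pow_pos hs 2).not_ge hCS
    refine ⟨sub_nonneg.2 (div_le_of_le_mul₀ ht ha (by linarith)),
      sub_le_self _ (by positivity), ?_⟩
    linarith [two_mul_le_add_sq_div (s := c ⬝ᵥ x) ht_pos]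
  · exact ⟨ha, le_rfl, by linarith⟩

theorem stmt4 {N : ℕ} (Q : Matrix (Fin N) (Fin N) ℝ) (hQ : Q.PosSemidef)
    (α : Fin N → ℝ) (c : Fin N → ℝ) (hc : c = Q.mulVec α) (hc0 : c ≠ 0)
    (x : Fin N → ℝ) :
    0 ≤ Rmap Q c α x ∧ Rmap Q c α x ≤ c ⬝ᵥ α ∧ Rmap Q c α x ≤ Dmap Q c α x :=
  stmt4_general Q hQ α c hc x
end

section
/- The map R is quasiconvex on R^N: for all x, u ∈ R^N and t ∈ [0,1], R((1-t)x + t u) ≤ max{R(x), R(u)}. -/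
/-!
Write `‖x‖_Q = √(xᵀ Q x)`, a seminorm since `Q` is positive semidefinite. For `s > 0`, the sublevel
set `{R ≤ cᵀα - s}` consists of the `x` with `cᵀx > 0` and `(cᵀx)² ≥ s xᵀQx`, i.e. with
`√s ‖x‖_Q ≤ cᵀx`: a convex set, as a seminorm is convex and `x ↦ cᵀx` is linear. (On this set
`xᵀQx > 0`, since `xᵀQx = 0` forces `Qx = 0` and hence `cᵀx = αᵀQx = 0`.) For `s ≤ 0` the sublevel
set is everything, since `R ≤ cᵀα`. So all sublevel sets of `R` are convex.
-/

open Matrix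

open Set

namespace Matrix.PosSemidef

variable {n : Type*} [Fintype n] {M : Matrix n n ℝ}

theorem convexOn_sqrt_dotProduct_mulVec (hM : M.PosSemidef) :
    ConvexOn ℝ univ fun x : n → ℝ => √(x ⬝ᵥ M *ᵥ x) := by
  -- the seminorm induced by `M` is `‖x‖ = √((M *ᵥ x) ⬝ᵥ x)`
  let _ := M.toSeminormedAddCommGroup hM
  let _ := M.toInnerProductSpace hM
  have h := convexOn_univ_norm (E := n → ℝ)
  simp_rw [dotProduct_comm _ (M *ᵥ _)]
  exact h

theorem convex_setOf_smul_sqrt_dotProduct_mulVec_le (hM : M.PosSemidef) {s : ℝ} (hs : 0 ≤ s)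
    (c : n → ℝ) : Convex ℝ {x | s * √(x ⬝ᵥ M *ᵥ x) ≤ c ⬝ᵥ x} := by
  have h := ((hM.convexOn_sqrt_dotProduct_mulVec.smul hs).sub
    ((dotProductBilin ℝ ℝ c).concaveOn convex_univ)).convex_le 0
  simpa [sub_nonpos] using h

theorem mulVec_dotProduct_eq_zero_of_isotropic (hM : M.PosSemidef)
    {x : n → ℝ} (hx : x ⬝ᵥ M *ᵥ x = 0) (y : n → ℝ) : (M *ᵥ y) ⬝ᵥ x = 0 := by
  have hMx : M *ᵥ x = 0 := (hM.dotProduct_mulVec_zero_iff x).mp (by simpa using hx)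
  rw [dotProduct_comm, dotProduct_mulVec, ← mulVec_transpose,
    ← conjTranspose_eq_transpose_of_trivial, hM.isHermitian.eq, hMx, zero_dotProduct]

end Matrix.PosSemidef

section

variable {N : ℕ} {Q : Matrix (Fin N) (Fin N) ℝ} {c α : Fin N → ℝ}

theorem Rmap_le_dotProduct (hQ : Q.PosSemidef) (x : Fin N → ℝ) : Rmap Q c α x ≤ c ⬝ᵥ α := by
  have hq : 0 ≤ x ⬝ᵥ Q *ᵥ x := by simpa using hQ.dotProduct_mulVec_nonneg x
  unfold Rmap
  split_ifs
  · linarith [div_nonneg (sq_nonneg (c ⬝ᵥ x)) hq]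
  · rfl

theorem setOf_Rmap_le (hQ : Q.PosSemidef) (hc : c = Q *ᵥ α) {r : ℝ} (hr : r < c ⬝ᵥ α) :
    {x | Rmap Q c α x ≤ r} =
      {x | 0 < c ⬝ᵥ x} ∩ {x | √(c ⬝ᵥ α - r) * √(x ⬝ᵥ Q *ᵥ x) ≤ c ⬝ᵥ x} := by
  ext x
  simp only [mem_ofPred_eq, mem_inter_iff, Rmap]
  split_ifs with hx
  · have hq : 0 < x ⬝ᵥ Q *ᵥ x := by
      refine (hQ.dotProduct_mulVec_nonneg x).lt_of_ne' fun hq => hx.ne' ?_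
      rw [hc]
      exact hQ.mulVec_dotProduct_eq_zero_of_isotropic (by simpa using hq) α
    rw [← Real.sqrt_mul (sub_nonneg.2 hr.le), Real.sqrt_le_left hx.le, ← le_div_iff₀ hq]
    simp only [hx, true_and]
    constructor <;> intro h <;> linarith
  · simp [hx, hr.not_ge]

theorem quasiconvexOn_Rmap (hQ : Q.PosSemidef) (hc : c = Q *ᵥ α) :
    QuasiconvexOn ℝ univ (Rmap Q c α) := by
  intro r
  simp only [mem_univ, true_and]
  rcases lt_or_ge r (c ⬝ᵥ α) with hr | hr
  · rw [setOf_Rmap_le hQ hc hr]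
    exact (convex_halfSpace_gt (dotProductBilin ℝ ℝ c).isLinear 0).inter
      (hQ.convex_setOf_smul_sqrt_dotProduct_mulVec_le (Real.sqrt_nonneg _) c)
  · convert convex_univ
    exact eq_univ_of_forall fun x => (Rmap_le_dotProduct hQ x).trans hr

end

theorem stmt5_general {N : ℕ} (Q : Matrix (Fin N) (Fin N) ℝ) (hQ : Q.PosSemidef)
    (α : Fin N → ℝ) (c : Fin N → ℝ) (hc : c = Q.mulVec α)
    (x u : Fin N → ℝ) (t : ℝ) (ht : t ∈ Set.Icc (0 : ℝ) 1) :
    Rmap Q c α ((1 - t) • x + t • u) ≤ max (Rmap Q c α x) (Rmap Q c α u) :=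
  (quasiconvexOn_iff_le_max.mp (quasiconvexOn_Rmap hQ hc)).2 (mem_univ x) (mem_univ u)
    (sub_nonneg.2 ht.2) ht.1 (sub_add_cancel 1 t)

theorem stmt5 {N : ℕ} (Q : Matrix (Fin N) (Fin N) ℝ) (hQ : Q.PosSemidef)
    (α : Fin N → ℝ) (c : Fin N → ℝ) (hc : c = Q.mulVec α) (hc0 : c ≠ 0)
    (x u : Fin N → ℝ) (t : ℝ) (ht : t ∈ Set.Icc (0 : ℝ) 1) :
    Rmap Q c α ((1 - t) • x + t • u) ≤ max (Rmap Q c α x) (Rmap Q c α u) :=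
  stmt5_general Q hQ α c hc x u t ht
end

section
/- R is pseudoconvex on the cone C = {x : c^T x > 0} in the following sense: if x, u ∈ C and u^T (s_x Q x - c) ≥ 0, where s_x = (c^T x)/(x^T Q x), then R(x) ≤ R(u). -/
/-! The stationarity condition reads `(c ⬝ᵥ u) (xᵀQx) ≤ (c ⬝ᵥ x) (uᵀQx)`, once one knows `xᵀQx > 0`
(if `xᵀQx = 0` the division gives `0` and the condition collapses to `c ⬝ᵥ u ≤ 0`). Squaring it and
applying Cauchy–Schwarz for the semi-inner product `Q`, `(uᵀQx)² ≤ (uᵀQu)(xᵀQx)`, gives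
`(c ⬝ᵥ u)² / uᵀQu ≤ (c ⬝ᵥ x)² / xᵀQx`, that is `R x ≤ R u`. -/

open Matrix

namespace Matrix.PosSemidef

variable {n : Type*} [Fintype n] {Q : Matrix n n ℝ}

lemma dotProduct_mulVec_comm (hQ : Q.PosSemidef) (v w : n → ℝ) :
    v ⬝ᵥ Q *ᵥ w = w ⬝ᵥ Q *ᵥ v := by
  simpa [(isHermitian_iff_isSymm.mp hQ.isHermitian).eq] using dotProduct_transpose_mulVec Q v w

lemma dotProduct_mulVec_self_nonneg (hQ : Q.PosSemidef) (v : n → ℝ) :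
    0 ≤ v ⬝ᵥ Q *ᵥ v := by
  simpa using hQ.dotProduct_mulVec_nonneg v

lemma dotProduct_mulVec_sq_le (hQ : Q.PosSemidef) (v w : n → ℝ) :
    (v ⬝ᵥ Q *ᵥ w) ^ 2 ≤ (v ⬝ᵥ Q *ᵥ v) * (w ⬝ᵥ Q *ᵥ w) := by
  have hquad : ∀ t : ℝ,
      0 ≤ (w ⬝ᵥ Q *ᵥ w) * (t * t) + 2 * (v ⬝ᵥ Q *ᵥ w) * t + v ⬝ᵥ Q *ᵥ v := by
    intro t
    have h := hQ.dotProduct_mulVec_self_nonneg (v + t • w)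
    simp only [mulVec_add, mulVec_smul, dotProduct_add, add_dotProduct, dotProduct_smul,
      smul_dotProduct, smul_eq_mul, hQ.dotProduct_mulVec_comm w v] at h
    linarith
  have := discrim_le_zero hquad
  rw [discrim] at this
  linarith

end Matrix.PosSemidef

lemma sq_div_le_sq_div_of_mul_le_mul {a b p q r : ℝ} (hb : 0 < b) (hp : 0 < p)
    (hr : r ^ 2 ≤ q * p) (h : b * p ≤ a * r) : b ^ 2 / q ≤ a ^ 2 / p := by
  have har : 0 < a * r := (mul_pos hb hp).trans_le h
  have hq : 0 < q :=
    pos_of_mul_pos_left ((pow_two_pos_of_ne_zero (right_ne_zero_of_mul har.ne')).trans_le hr) hp.le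
  rw [div_le_div_iff₀ hq hp]
  have hsq : (b * p) ^ 2 ≤ (a * r) ^ 2 := pow_le_pow_left₀ (by positivity) h 2
  nlinarith [mul_le_mul_of_nonneg_left hr (sq_nonneg a)]

theorem stmt6_general {N : ℕ} (Q : Matrix (Fin N) (Fin N) ℝ) (hQ : Q.PosSemidef)
    (α : Fin N → ℝ) (c : Fin N → ℝ)
    (x u : Fin N → ℝ) (hx : 0 < c ⬝ᵥ x) (hu : 0 < c ⬝ᵥ u)
    (hgrad : 0 ≤ u ⬝ᵥ (((c ⬝ᵥ x) / (x ⬝ᵥ Q.mulVec x)) • Q.mulVec x - c)) :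
    Rmap Q c α x ≤ Rmap Q c α u := by
  have hgrad' : c ⬝ᵥ u ≤ c ⬝ᵥ x / (x ⬝ᵥ Q *ᵥ x) * (u ⬝ᵥ Q *ᵥ x) := by
    simpa [dotProduct_sub, dotProduct_comm u c] using hgrad
  have hqx : 0 < x ⬝ᵥ Q *ᵥ x := by
    refine (hQ.dotProduct_mulVec_self_nonneg x).lt_of_ne fun h0 => ?_
    rw [← h0, div_zero, zero_mul] at hgrad'
    linarith
  have hstat : c ⬝ᵥ u * (x ⬝ᵥ Q *ᵥ x) ≤ c ⬝ᵥ x * (u ⬝ᵥ Q *ᵥ x) := by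
    rwa [div_mul_eq_mul_div, le_div_iff₀ hqx] at hgrad'
  have hR := sq_div_le_sq_div_of_mul_le_mul hu hqx (hQ.dotProduct_mulVec_sq_le u x) hstat
  simp only [Rmap, if_pos hx, if_pos hu]
  linarith

theorem stmt6 {N : ℕ} (Q : Matrix (Fin N) (Fin N) ℝ) (hQ : Q.PosSemidef)
    (α : Fin N → ℝ) (c : Fin N → ℝ) (hc : c = Q.mulVec α) (hc0 : c ≠ 0)
    (x u : Fin N → ℝ) (hx : 0 < c ⬝ᵥ x) (hu : 0 < c ⬝ᵥ u)
    (hgrad : 0 ≤ u ⬝ᵥ (((c ⬝ᵥ x) / (x ⬝ᵥ Q.mulVec x)) • Q.mulVec x - c)) :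
    Rmap Q c α x ≤ Rmap Q c α u :=
  stmt6_general Q hQ α c x u hx hu hgrad
end

section
/- Let x, v ∈ R^N be such that Qx and Qv are not collinear and (c^T x, c^T v) ≠ (0,0). Set z = Υ(v;x) x + Υ(x;v) v, where Υ(a;b) = (c^T b)(a^T Q a) - (c^T a)(b^T Q a). Then c^T z > 0 and the set of minimisers of R over span{x,v} is exactly the open ray {s z : s > 0}. -/
open Matrix

/-- `Υ(a;b) = (cᵀb)(aᵀQa) - (cᵀa)(bᵀQa)`. -/
noncomputable def Ups {N : ℕ} (Q : Matrix (Fin N) (Fin N) ℝ) (c : Fin N → ℝ)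
    (a b : Fin N → ℝ) : ℝ :=
  (c ⬝ᵥ b) * (a ⬝ᵥ Q.mulVec a) - (c ⬝ᵥ a) * (b ⬝ᵥ Q.mulVec a)

/-!
Write `w = a x + b v` and let `A = xᵀQx`, `B = vᵀQv`, `D = xᵀQv`, `p = cᵀx`, `q = cᵀv`. Then
`wᵀQw = S(a, b) := binQuad A B D a b`, which is positive definite because `Qx` and `Qv` are
independent, and `R(w) = binRmap (cᵀα) A B D p q a b`. With the adjugate form
`V := binQuad B A (-D)`, the Lagrange identity
  `V(p, q) S(a, b) - (AB - D²)(ap + bq)² = (a(qA - pD) - b(pB - qD))²`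
is Cauchy–Schwarz for `S`: `(ap + bq)² / S(a, b) ≤ V(p, q) / (AB - D²)`, with equality exactly
on the line through `(Υ(v;x), Υ(x;v)) = (pB - qD, qA - pD)`. As `cᵀz = V(p, q) > 0`, the minimum
`cᵀα - V/(AB - D²)` is attained on the positive half of that line and nowhere else.
-/

def binQuad (A B D a b : ℝ) : ℝ := a ^ 2 * A + 2 * a * b * D + b ^ 2 * B

def BinQuadPosDef (A B D : ℝ) : Prop := ∀ a b : ℝ, (a, b) ≠ (0, 0) → 0 < binQuad A B D a b

noncomputable def binRmap (K A B D p q a b : ℝ) : ℝ :=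
  if 0 < a * p + b * q then K - (a * p + b * q) ^ 2 / binQuad A B D a b else K

lemma binQuad_adj_mul_binQuad_sub_det_mul_sq (A B D p q a b : ℝ) :
    binQuad B A (-D) p q * binQuad A B D a b - (A * B - D ^ 2) * (a * p + b * q) ^ 2
      = (a * (q * A - p * D) - b * (p * B - q * D)) ^ 2 := by
  unfold binQuad; ring

namespace BinQuadPosDef

variable {A B D p q a b : ℝ}

lemma right_pos (hS : BinQuadPosDef A B D) : 0 < B := by
  simpa [binQuad] using hS 0 1 (by simp)

lemma det_pos (hS : BinQuadPosDef A B D) : 0 < A * B - D ^ 2 := by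
  have hB := hS.right_pos
  have hBΔ : 0 < B * (A * B - D ^ 2) := by
    have := hS B (-D) (by simp [hB.ne'])
    unfold binQuad at this
    linarith
  exact pos_of_mul_pos_right hBΔ hB.le

lemma pos_of_mul_add_mul_pos (hS : BinQuadPosDef A B D) (h : 0 < a * p + b * q) :
    0 < binQuad A B D a b :=
  hS a b fun hab => by simp_all

lemma adj_pos (hS : BinQuadPosDef A B D) (hpq : (p, q) ≠ (0, 0)) :
    0 < binQuad B A (-D) p q := by
  have hB := hS.right_pos
  have hΔ := hS.det_pos
  have hBV : B * binQuad B A (-D) p q = (B * p - D * q) ^ 2 + (A * B - D ^ 2) * q ^ 2 := by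
    unfold binQuad; ring
  refine pos_of_mul_pos_right (hBV ▸ ?_) hB.le
  rcases eq_or_ne q 0 with rfl | hq
  · have hp : p ≠ 0 := by simpa using hpq
    rw [mul_zero, sub_zero, zero_pow two_ne_zero, mul_zero, add_zero]
    positivity
  · positivity

lemma sq_div_le (hS : BinQuadPosDef A B D) (h : 0 < binQuad A B D a b) :
    (a * p + b * q) ^ 2 / binQuad A B D a b ≤ binQuad B A (-D) p q / (A * B - D ^ 2) := by
  rw [div_le_div_iff₀ h hS.det_pos]
  nlinarith [binQuad_adj_mul_binQuad_sub_det_mul_sq A B D p q a b,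
    sq_nonneg (a * (q * A - p * D) - b * (p * B - q * D))]

lemma sq_div_eq_iff (hS : BinQuadPosDef A B D) (h : 0 < binQuad A B D a b) :
    (a * p + b * q) ^ 2 / binQuad A B D a b = binQuad B A (-D) p q / (A * B - D ^ 2) ↔
      a * (q * A - p * D) = b * (p * B - q * D) := by
  rw [div_eq_div_iff h.ne' hS.det_pos.ne', ← sub_eq_zero, eq_comm, ← sub_eq_zero (a := a * _),
    ← pow_eq_zero_iff two_ne_zero, ← binQuad_adj_mul_binQuad_sub_det_mul_sq]
  constructor <;> intro h <;> linarith

lemma le_binRmap (hS : BinQuadPosDef A B D) (hpq : (p, q) ≠ (0, 0)) (K : ℝ) :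
    K - binQuad B A (-D) p q / (A * B - D ^ 2) ≤ binRmap K A B D p q a b := by
  unfold binRmap
  split_ifs with h
  · exact sub_le_sub_left (hS.sq_div_le (hS.pos_of_mul_add_mul_pos h)) K
  · exact sub_le_self K (div_pos (hS.adj_pos hpq) hS.det_pos).le

lemma binRmap_eq_iff (hS : BinQuadPosDef A B D) (hpq : (p, q) ≠ (0, 0)) (K : ℝ) :
    binRmap K A B D p q a b = K - binQuad B A (-D) p q / (A * B - D ^ 2) ↔
      ∃ s, 0 < s ∧ a = s * (p * B - q * D) ∧ b = s * (q * A - p * D) := by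
  have hV := hS.adj_pos hpq
  have hVΔ := div_pos hV hS.det_pos
  have hpair : (p * B - q * D) * p + (q * A - p * D) * q = binQuad B A (-D) p q := by
    unfold binQuad; ring
  unfold binRmap
  constructor
  · intro hR
    split_ifs at hR with h
    · have hcross := (hS.sq_div_eq_iff (hS.pos_of_mul_add_mul_pos h)).1 (sub_right_inj.1 hR)
      refine ⟨(a * p + b * q) / binQuad B A (-D) p q, div_pos h hV, ?_, ?_⟩ <;>
        rw [div_mul_eq_mul_div, eq_div_iff hV.ne', ← hpair]
      · linear_combination q * hcross
      · linear_combination (-p) * hcross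
    · exact absurd hR (sub_lt_self K hVΔ).ne'
  · rintro ⟨s, hs, rfl, rfl⟩
    have hL : s * (p * B - q * D) * p + s * (q * A - p * D) * q = s * binQuad B A (-D) p q := by
      rw [← hpair]; ring
    rw [hL, if_pos (mul_pos hs hV), sub_right_inj, ← hL, hS.sq_div_eq_iff]
    · ring
    · exact hS.pos_of_mul_add_mul_pos (hL ▸ mul_pos hs hV)

end BinQuadPosDef

section QuadraticForm

variable {n : Type*} [Fintype n] {Q : Matrix n n ℝ}

lemma Matrix.IsHermitian.dotProduct_mulVec_comm (hQ : Q.IsHermitian) (x y : n → ℝ) :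
    x ⬝ᵥ Q *ᵥ y = y ⬝ᵥ Q *ᵥ x := by
  rw [dotProduct_mulVec, ← mulVec_transpose, ← conjTranspose_eq_transpose_of_trivial, hQ.eq,
    dotProduct_comm]

lemma Matrix.IsHermitian.dotProduct_mulVec_add_smul (hQ : Q.IsHermitian) (x v : n → ℝ)
    (a b : ℝ) :
    (a • x + b • v) ⬝ᵥ Q *ᵥ (a • x + b • v) =
      binQuad (x ⬝ᵥ Q *ᵥ x) (v ⬝ᵥ Q *ᵥ v) (x ⬝ᵥ Q *ᵥ v) a b := by
  simp only [mulVec_add, mulVec_smul, dotProduct_add, add_dotProduct, smul_dotProduct,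
    dotProduct_smul, smul_eq_mul, hQ.dotProduct_mulVec_comm v x, binQuad]
  ring

lemma Matrix.PosSemidef.binQuadPosDef (hQ : Q.PosSemidef) {x v : n → ℝ}
    (hxv : LinearIndependent ℝ ![Q *ᵥ x, Q *ᵥ v]) :
    BinQuadPosDef (x ⬝ᵥ Q *ᵥ x) (v ⬝ᵥ Q *ᵥ v) (x ⬝ᵥ Q *ᵥ v) := by
  intro a b hab
  rw [← hQ.isHermitian.dotProduct_mulVec_add_smul]
  have hnonneg : 0 ≤ (a • x + b • v) ⬝ᵥ Q *ᵥ (a • x + b • v) := by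
    simpa using hQ.dotProduct_mulVec_nonneg (a • x + b • v)
  refine hnonneg.lt_of_ne fun h => hab ?_
  have hzero : a • Q *ᵥ x + b • Q *ᵥ v = 0 := by
    rw [← mulVec_smul, ← mulVec_smul, ← mulVec_add]
    exact (hQ.dotProduct_mulVec_zero_iff _).1 (by simpa using h.symm)
  simpa using LinearIndependent.pair_iff.1 hxv a b hzero

end QuadraticForm

section Rayleigh

variable {N : ℕ} {Q : Matrix (Fin N) (Fin N) ℝ}

lemma Rmap_add_smul (hQ : Q.IsHermitian) (c α x v : Fin N → ℝ) (a b : ℝ) :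
    Rmap Q c α (a • x + b • v) =
      binRmap (c ⬝ᵥ α) (x ⬝ᵥ Q *ᵥ x) (v ⬝ᵥ Q *ᵥ v) (x ⬝ᵥ Q *ᵥ v) (c ⬝ᵥ x) (c ⬝ᵥ v) a b := by
  have hc : c ⬝ᵥ (a • x + b • v) = a * (c ⬝ᵥ x) + b * (c ⬝ᵥ v) := by
    simp only [dotProduct_add, dotProduct_smul, smul_eq_mul]
  rw [Rmap, binRmap, hc, hQ.dotProduct_mulVec_add_smul]

lemma Ups_smul_add_Ups_smul (hQ : Q.IsHermitian) (c x v : Fin N → ℝ) :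
    Ups Q c v x • x + Ups Q c x v • v =
      ((c ⬝ᵥ x) * (v ⬝ᵥ Q *ᵥ v) - (c ⬝ᵥ v) * (x ⬝ᵥ Q *ᵥ v)) • x +
        ((c ⬝ᵥ v) * (x ⬝ᵥ Q *ᵥ x) - (c ⬝ᵥ x) * (x ⬝ᵥ Q *ᵥ v)) • v := by
  rw [Ups, Ups, hQ.dotProduct_mulVec_comm v x]

end Rayleigh

theorem stmt9_general {N : ℕ} (Q : Matrix (Fin N) (Fin N) ℝ) (hQ : Q.PosSemidef)
    (α : Fin N → ℝ) (c : Fin N → ℝ)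
    (x v : Fin N → ℝ)
    (hnc : LinearIndependent ℝ ![Q.mulVec x, Q.mulVec v])
    (hcxv : (c ⬝ᵥ x, c ⬝ᵥ v) ≠ (0, 0)) :
    0 < c ⬝ᵥ (Ups Q c v x • x + Ups Q c x v • v) ∧
    {w : Fin N → ℝ | w ∈ (Submodule.span ℝ ({x, v} : Set (Fin N → ℝ)) :
        Set (Fin N → ℝ)) ∧
      ∀ z ∈ (Submodule.span ℝ ({x, v} : Set (Fin N → ℝ)) : Set (Fin N → ℝ)),
        Rmap Q c α w ≤ Rmap Q c α z}
      = {w : Fin N → ℝ | ∃ s : ℝ, 0 < s ∧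
          w = s • (Ups Q c v x • x + Ups Q c x v • v)} := by
  have hS := hQ.binQuadPosDef hnc
  have hR := Rmap_add_smul hQ.isHermitian c α x v
  rw [Ups_smul_add_Ups_smul hQ.isHermitian]
  set A := x ⬝ᵥ Q *ᵥ x
  set B := v ⬝ᵥ Q *ᵥ v
  set D := x ⬝ᵥ Q *ᵥ v
  set p := c ⬝ᵥ x
  set q := c ⬝ᵥ v
  have hmin : binRmap (c ⬝ᵥ α) A B D p q (p * B - q * D) (q * A - p * D) =
      c ⬝ᵥ α - binQuad B A (-D) p q / (A * B - D ^ 2) :=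
    (hS.binRmap_eq_iff hcxv _).2 ⟨1, one_pos, (one_mul _).symm, (one_mul _).symm⟩
  refine ⟨?_, ?_⟩
  · convert hS.adj_pos hcxv using 1
    simp only [dotProduct_add, dotProduct_smul, smul_eq_mul, binQuad]
    ring
  ext w
  simp only [Set.mem_ofPred_eq, SetLike.mem_coe, Submodule.mem_span_pair]
  constructor
  · rintro ⟨⟨a, b, rfl⟩, hw⟩
    have hle := hw _ ⟨p * B - q * D, q * A - p * D, rfl⟩
    rw [hR, hR, hmin] at hle
    obtain ⟨s, hs, rfl, rfl⟩ := (hS.binRmap_eq_iff hcxv _).1 (hle.antisymm (hS.le_binRmap hcxv _))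
    exact ⟨s, hs, by simp only [smul_add, smul_smul]⟩
  · rintro ⟨s, hs, rfl⟩
    rw [smul_add, smul_smul, smul_smul]
    refine ⟨⟨_, _, rfl⟩, ?_⟩
    rintro _ ⟨a, b, rfl⟩
    rw [hR, hR, (hS.binRmap_eq_iff hcxv _).2 ⟨s, hs, rfl, rfl⟩]
    exact hS.le_binRmap hcxv _

theorem stmt9 {N : ℕ} (Q : Matrix (Fin N) (Fin N) ℝ) (hQ : Q.PosSemidef)
    (α : Fin N → ℝ) (c : Fin N → ℝ) (hc : c = Q.mulVec α) (hc0 : c ≠ 0)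
    (x v : Fin N → ℝ)
    (hnc : LinearIndependent ℝ ![Q.mulVec x, Q.mulVec v])
    (hcxv : (c ⬝ᵥ x, c ⬝ᵥ v) ≠ (0, 0)) :
    0 < c ⬝ᵥ (Ups Q c v x • x + Ups Q c x v • v) ∧
    {w : Fin N → ℝ | w ∈ (Submodule.span ℝ ({x, v} : Set (Fin N → ℝ)) :
        Set (Fin N → ℝ)) ∧
      ∀ z ∈ (Submodule.span ℝ ({x, v} : Set (Fin N → ℝ)) : Set (Fin N → ℝ)),
        Rmap Q c α w ≤ Rmap Q c α z}
      = {w : Fin N → ℝ | ∃ s : ℝ, 0 < s ∧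
          w = s • (Ups Q c v x • x + Ups Q c x v • v)} :=
  stmt9_general Q hQ α c x v hnc hcxv
end

section
/- Let x ∈ C and v ∈ R^N with Qx and Qv non-collinear, and suppose Υ(v;x) ≤ 0. Then the function t ↦ R(x + t v), t ∈ R, is monotonic and inf over t of R(x + t v) = min{R(-v), R(v)}. -/
open Matrix

/-!
Along the line `t ↦ x + t • v` (flipping `v` if needed so that `c ⬝ᵥ v > 0`) the quantity
`Υ(v; ·)` is constant, and together with `Υ(·; v)` it satisfies
`(cᵀv) Υ(y; v) + (cᵀy) Υ(v; y) = q((cᵀv) y - (cᵀy) v) ≥ 0`, where `q` is the quadratic form of `Q`.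
Hence `Υ(y; v) ≥ 0` wherever `cᵀy > 0`, and this is exactly the sign that makes
`(cᵀy)² / q(y)` grow along the line, so `R` decreases. Since `R` is invariant under positive
scaling, `R(x + t v) = R(x / t + v) → R(v)` as `t → ∞`, which is the infimum; and `R(-v) = cᵀα`
is the largest possible value.
-/

open Filter Topology

namespace Matrix

variable {n R : Type*} [Fintype n]

theorem IsSymm.dotProduct_mulVec_comm [CommSemiring R] {Q : Matrix n n R} (hQ : Q.IsSymm)
    (v w : n → R) : v ⬝ᵥ Q *ᵥ w = w ⬝ᵥ Q *ᵥ v := by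
  rw [dotProduct_mulVec, ← mulVec_transpose, hQ.eq, dotProduct_comm]

theorem IsSymm.smul_add_smul_dotProduct_mulVec [CommRing R] {Q : Matrix n n R} (hQ : Q.IsSymm)
    (a b : R) (v w : n → R) :
    (a • v + b • w) ⬝ᵥ Q *ᵥ (a • v + b • w) =
      a ^ 2 * (v ⬝ᵥ Q *ᵥ v) + 2 * a * b * (v ⬝ᵥ Q *ᵥ w) + b ^ 2 * (w ⬝ᵥ Q *ᵥ w) := by
  simp only [mulVec_add, mulVec_smul, dotProduct_add, add_dotProduct, dotProduct_smul,
    smul_dotProduct, smul_eq_mul, hQ.dotProduct_mulVec_comm w v]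
  ring

theorem PosSemidef.dotProduct_mulVec_pos_of_mulVec_ne_zero {Q : Matrix n n ℝ}
    (hQ : Q.PosSemidef) {v : n → ℝ} (hv : Q *ᵥ v ≠ 0) : 0 < v ⬝ᵥ Q *ᵥ v := by
  refine (hQ.dotProduct_mulVec_nonneg v).lt_of_ne' fun h => hv ?_
  simpa using (hQ.dotProduct_mulVec_zero_iff v).mp (by simpa using h)

end Matrix

variable {N : ℕ} {Q : Matrix (Fin N) (Fin N) ℝ} {c α : Fin N → ℝ}

theorem Ups_add_smul_right (v y : Fin N → ℝ) (s : ℝ) : Ups Q c v (y + s • v) = Ups Q c v y := by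
  simp only [Ups, dotProduct_add, add_dotProduct, dotProduct_smul, smul_dotProduct, smul_eq_mul]
  ring

theorem Ups_neg_left (v y : Fin N → ℝ) : Ups Q c (-v) y = Ups Q c v y := by
  simp only [Ups, mulVec_neg, dotProduct_neg, neg_dotProduct]
  ring

/-- The combination is the quadratic form at `(c ⬝ᵥ v) • y - (c ⬝ᵥ y) • v`. -/
theorem mul_Ups_add_mul_Ups_nonneg (hQ : Q.PosSemidef) (y v : Fin N → ℝ) :
    0 ≤ (c ⬝ᵥ v) * Ups Q c y v + (c ⬝ᵥ y) * Ups Q c v y := by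
  have hsymm : Q.IsSymm := isHermitian_iff_isSymm.mp hQ.1
  have h := hQ.dotProduct_mulVec_nonneg ((c ⬝ᵥ v) • y + (-(c ⬝ᵥ y)) • v)
  rw [star_trivial, hsymm.smul_add_smul_dotProduct_mulVec] at h
  simp only [Ups, hsymm.dotProduct_mulVec_comm v y]
  linarith

theorem Rmap_le (hQ : Q.PosSemidef) (y : Fin N → ℝ) : Rmap Q c α y ≤ c ⬝ᵥ α := by
  unfold Rmap
  split_ifs
  · have hq : 0 ≤ y ⬝ᵥ Q *ᵥ y := by simpa using hQ.dotProduct_mulVec_nonneg y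
    linarith [div_nonneg (sq_nonneg (c ⬝ᵥ y)) hq]
  · exact le_rfl

theorem Rmap_smul {r : ℝ} (hr : 0 < r) (y : Fin N → ℝ) :
    Rmap Q c α (r • y) = Rmap Q c α y := by
  have hquad : r • y ⬝ᵥ Q *ᵥ (r • y) = r ^ 2 * (y ⬝ᵥ Q *ᵥ y) := by
    simp only [mulVec_smul, dotProduct_smul, smul_dotProduct, smul_eq_mul]
    ring
  simp only [Rmap, dotProduct_smul, smul_eq_mul, hquad, mul_pow, mul_pos_iff_of_pos_left hr]
  rw [mul_div_mul_left _ _ (by positivity)]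

theorem continuousAt_Rmap {v : Fin N → ℝ} (hv : 0 < c ⬝ᵥ v) (hQv : 0 < v ⬝ᵥ Q *ᵥ v) :
    ContinuousAt (Rmap Q c α) v := by
  have hc : Continuous fun y : Fin N → ℝ => c ⬝ᵥ y :=
    continuous_const.dotProduct continuous_id
  have hq : Continuous fun y : Fin N → ℝ => y ⬝ᵥ Q *ᵥ y :=
    continuous_id.dotProduct (continuous_const.matrix_mulVec continuous_id)
  have hratio : ContinuousAt (fun y => c ⬝ᵥ α - (c ⬝ᵥ y) ^ 2 / (y ⬝ᵥ Q *ᵥ y)) v :=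
    continuousAt_const.sub ((hc.pow 2).continuousAt.div hq.continuousAt hQv.ne')
  refine hratio.congr ?_
  filter_upwards [continuousAt_const.eventually_lt hc.continuousAt hv] with y hy
  exact (if_pos hy).symm

theorem Rmap_add_smul_le (hQ : Q.PosSemidef) {y v : Fin N → ℝ} {h : ℝ} (hy : 0 < c ⬝ᵥ y)
    (hv : 0 < c ⬝ᵥ v) (hU : Ups Q c v y ≤ 0) (hqy : 0 < y ⬝ᵥ Q *ᵥ y)
    (hqyv : 0 < (y + h • v) ⬝ᵥ Q *ᵥ (y + h • v)) (hh : 0 ≤ h) :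
    Rmap Q c α (y + h • v) ≤ Rmap Q c α y := by
  have hsymm : Q.IsSymm := isHermitian_iff_isSymm.mp hQ.1
  have hcomb := mul_Ups_add_mul_Ups_nonneg (c := c) hQ y v
  have hA : 0 ≤ Ups Q c y v := by
    refine nonneg_of_mul_nonneg_right ?_ hv
    nlinarith [mul_nonpos_of_nonneg_of_nonpos hy.le hU]
  have hcyv : c ⬝ᵥ (y + h • v) = c ⬝ᵥ y + h * (c ⬝ᵥ v) := by simp
  have hquad : (y + h • v) ⬝ᵥ Q *ᵥ (y + h • v) =
      y ⬝ᵥ Q *ᵥ y + 2 * h * (y ⬝ᵥ Q *ᵥ v) + h ^ 2 * (v ⬝ᵥ Q *ᵥ v) := by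
    simpa using hsymm.smul_add_smul_dotProduct_mulVec 1 h y v
  have key : (c ⬝ᵥ (y + h • v)) ^ 2 * (y ⬝ᵥ Q *ᵥ y)
        - (c ⬝ᵥ y) ^ 2 * ((y + h • v) ⬝ᵥ Q *ᵥ (y + h • v))
      = 2 * h * (c ⬝ᵥ y) * Ups Q c y v
        + h ^ 2 * ((c ⬝ᵥ v) * Ups Q c y v - (c ⬝ᵥ y) * Ups Q c v y) := by
    rw [hcyv, hquad]
    simp only [Ups, hsymm.dotProduct_mulVec_comm v y]
    ring
  have hgain : (c ⬝ᵥ y) ^ 2 / (y ⬝ᵥ Q *ᵥ y)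
      ≤ (c ⬝ᵥ (y + h • v)) ^ 2 / ((y + h • v) ⬝ᵥ Q *ᵥ (y + h • v)) := by
    rw [div_le_div_iff₀ hqy hqyv, ← sub_nonneg, key]
    refine add_nonneg (mul_nonneg (by positivity) hA) (mul_nonneg (sq_nonneg h) ?_)
    nlinarith [mul_nonneg hv.le hA, mul_nonpos_of_nonneg_of_nonpos hy.le hU]
  rw [Rmap, Rmap, if_pos hy, if_pos (by rw [hcyv]; positivity)]
  linarith

theorem tendsto_Rmap_add_smul_atTop (x : Fin N → ℝ) {v : Fin N → ℝ} (hv : 0 < c ⬝ᵥ v)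
    (hQv : 0 < v ⬝ᵥ Q *ᵥ v) :
    Tendsto (fun t : ℝ => Rmap Q c α (x + t • v)) atTop (𝓝 (Rmap Q c α v)) := by
  have hlim : Tendsto (fun t : ℝ => t⁻¹ • x + v) atTop (𝓝 v) := by
    simpa using ((tendsto_inv_atTop_zero (𝕜 := ℝ)).smul_const x).add_const v
  refine ((continuousAt_Rmap hv hQv).tendsto.comp hlim).congr' ?_
  filter_upwards [eventually_gt_atTop 0] with t ht
  rw [Function.comp_apply, ← Rmap_smul ht, smul_add, smul_inv_smul₀ ht.ne']

theorem antitone_Rmap_add_smul (hQ : Q.PosSemidef) {x v : Fin N → ℝ} (hv : 0 < c ⬝ᵥ v)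
    (hU : Ups Q c v x ≤ 0) (hline : ∀ t : ℝ, 0 < (x + t • v) ⬝ᵥ Q *ᵥ (x + t • v)) :
    Antitone fun t : ℝ => Rmap Q c α (x + t • v) := by
  intro s t hst
  by_cases hs : 0 < c ⬝ᵥ (x + s • v)
  · have hxt : x + t • v = x + s • v + (t - s) • v := by
      rw [add_assoc, ← add_smul, add_sub_cancel]
    show Rmap Q c α (x + t • v) ≤ _
    rw [hxt]
    exact Rmap_add_smul_le hQ hs hv (by rwa [Ups_add_smul_right]) (hline s) (hxt ▸ hline t)
      (sub_nonneg.mpr hst)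
  · show _ ≤ Rmap Q c α (x + s • v)
    rw [show Rmap Q c α (x + s • v) = c ⬝ᵥ α from if_neg hs]
    exact Rmap_le hQ _

theorem antitone_and_sInf_Rmap_add_smul (hQ : Q.PosSemidef) {x v : Fin N → ℝ}
    (hv : 0 < c ⬝ᵥ v) (hU : Ups Q c v x ≤ 0)
    (hline : ∀ t : ℝ, 0 < (x + t • v) ⬝ᵥ Q *ᵥ (x + t • v))
    (hQv : 0 < v ⬝ᵥ Q *ᵥ v) :
    Antitone (fun t : ℝ => Rmap Q c α (x + t • v)) ∧
      sInf (Set.range fun t : ℝ => Rmap Q c α (x + t • v))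
        = min (Rmap Q c α (-v)) (Rmap Q c α v) := by
  have hanti := antitone_Rmap_add_smul (α := α) hQ hv hU hline
  have hneg : Rmap Q c α (-v) = c ⬝ᵥ α := if_neg (by simpa using hv.le)
  refine ⟨hanti, ?_⟩
  rw [(isGLB_of_tendsto_atTop hanti (tendsto_Rmap_add_smul_atTop x hv hQv)).csInf_eq
    (Set.range_nonempty _), hneg, min_eq_right (Rmap_le hQ v)]

theorem stmt11_general {N : ℕ} (Q : Matrix (Fin N) (Fin N) ℝ) (hQ : Q.PosSemidef)
    (α : Fin N → ℝ) (c : Fin N → ℝ)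
    (x v : Fin N → ℝ) (hx : 0 < c ⬝ᵥ x)
    (hnc : LinearIndependent ℝ ![Q.mulVec x, Q.mulVec v])
    (hU : Ups Q c v x ≤ 0) :
    (Monotone (fun t : ℝ => Rmap Q c α (x + t • v)) ∨
      Antitone (fun t : ℝ => Rmap Q c α (x + t • v))) ∧
    sInf (Set.range (fun t : ℝ => Rmap Q c α (x + t • v)))
      = min (Rmap Q c α (-v)) (Rmap Q c α v) := by
  have hpair := LinearIndependent.pair_iff.mp hnc
  have hline (t : ℝ) : 0 < (x + t • v) ⬝ᵥ Q *ᵥ (x + t • v) :=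
    hQ.dotProduct_mulVec_pos_of_mulVec_ne_zero fun h =>
      one_ne_zero (hpair 1 t (by simpa [mulVec_add, mulVec_smul] using h)).1
  have hQv : 0 < v ⬝ᵥ Q *ᵥ v :=
    hQ.dotProduct_mulVec_pos_of_mulVec_ne_zero fun h => one_ne_zero (hpair 0 1 (by simp [h])).2
  rcases lt_trichotomy (c ⬝ᵥ v) 0 with hv | hv | hv
  · obtain ⟨hanti, hinf⟩ := antitone_and_sInf_Rmap_add_smul (α := α) (v := -v) hQ
      (by simpa using hv) (by rwa [Ups_neg_left]) (fun t => by simpa using hline (-t))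
      (by rwa [mulVec_neg, dotProduct_neg, neg_dotProduct, neg_neg])
    have hreflect : (fun t : ℝ => Rmap Q c α (x + t • -v))
        = (fun t : ℝ => Rmap Q c α (x + t • v)) ∘ Neg.neg := by
      ext t; simp
    rw [hreflect, neg_surjective.range_comp] at hinf
    rw [hreflect] at hanti
    refine ⟨Or.inl fun s t hst => by simpa using hanti (neg_le_neg hst), ?_⟩
    rw [hinf, neg_neg, min_comm]
  · exact absurd hU (by simpa [Ups, hv] using mul_pos hx hQv)
  · obtain ⟨hanti, hinf⟩ := antitone_and_sInf_Rmap_add_smul (α := α) hQ hv hU hline hQv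
    exact ⟨Or.inr hanti, hinf⟩

theorem stmt11 {N : ℕ} (Q : Matrix (Fin N) (Fin N) ℝ) (hQ : Q.PosSemidef)
    (α : Fin N → ℝ) (c : Fin N → ℝ) (hc : c = Q.mulVec α) (hc0 : c ≠ 0)
    (x v : Fin N → ℝ) (hx : 0 < c ⬝ᵥ x)
    (hnc : LinearIndependent ℝ ![Q.mulVec x, Q.mulVec v])
    (hU : Ups Q c v x ≤ 0) :
    (Monotone (fun t : ℝ => Rmap Q c α (x + t • v)) ∨
      Antitone (fun t : ℝ => Rmap Q c α (x + t • v))) ∧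
    sInf (Set.range (fun t : ℝ => Rmap Q c α (x + t • v)))
      = min (Rmap Q c α (-v)) (Rmap Q c α v) :=
  stmt11_general Q hQ α c x v hx hnc hU
end

section
/- Let x ∈ C and v ∈ R^N with Qx, Qv non-collinear. Then I_R(x;v) = I_D(s_x x; v) · A(x;v), where I_D(y;v) = (v^T(Qy - c))^2/(v^T Q v) and A(x;v) = (1 - (v^T Q x)^2/((v^T Q v)(x^T Q x)))^{-1}; moreover A(x;v) ≥ 1. -/
/-!
The denominator `vᵀQv - (vᵀQx)² / xᵀQx` of the exact line search equals `vᵀQv · (1 - ρ)` with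
`ρ = (vᵀQx)² / (vᵀQv · xᵀQx)`, and `Q (s_x x) = s_x Q x`, so the identity is pure field algebra.
The bound `A ≥ 1` amounts to `0 ≤ ρ < 1`, i.e. the strict Cauchy–Schwarz inequality for the
semi-inner product `⟨u, w⟩ = uᵀQw`, which holds as soon as `Qx` and `Qv` are linearly independent.
-/

open Matrix

theorem Matrix.IsSymm.dotProduct_mulVec_comm_s16 {n R : Type*} [Fintype n] [CommSemiring R]
    {Q : Matrix n n R} (hQ : Q.IsSymm) (u w : n → R) : u ⬝ᵥ Q *ᵥ w = w ⬝ᵥ Q *ᵥ u := by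
  rw [dotProduct_mulVec, ← mulVec_transpose, hQ.eq, dotProduct_comm]

namespace Matrix.PosSemidef

variable {n : Type*} [Fintype n] {Q : Matrix n n ℝ}

theorem dotProduct_mulVec_pos_of_mulVec_ne_zero_s16 (hQ : Q.PosSemidef) {y : n → ℝ}
    (hy : Q *ᵥ y ≠ 0) : 0 < y ⬝ᵥ Q *ᵥ y := by
  refine (by simpa using hQ.dotProduct_mulVec_nonneg y : 0 ≤ y ⬝ᵥ Q *ᵥ y).lt_of_ne' fun h => hy ?_
  exact (hQ.dotProduct_mulVec_zero_iff y).mp (by simpa using h)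

theorem sq_dotProduct_mulVec_lt (hQ : Q.PosSemidef) {x v : n → ℝ}
    (hxv : LinearIndependent ℝ ![Q *ᵥ x, Q *ᵥ v]) :
    (v ⬝ᵥ Q *ᵥ x) ^ 2 < (v ⬝ᵥ Q *ᵥ v) * (x ⬝ᵥ Q *ᵥ x) := by
  set a := x ⬝ᵥ Q *ᵥ x
  set b := v ⬝ᵥ Q *ᵥ x
  have ha : 0 < a := hQ.dotProduct_mulVec_pos_of_mulVec_ne_zero_s16 (hxv.ne_zero 0)
  -- `u` is the `Q`-orthogonal projection of `v` off `x`, scaled by `a`.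
  set u := a • v - b • x
  have hu : Q *ᵥ u ≠ 0 := by
    intro h
    have hcomb : (-b) • Q *ᵥ x + a • Q *ᵥ v = 0 := by
      rw [← h, mulVec_sub, mulVec_smul, mulVec_smul]
      module
    exact ha.ne' (LinearIndependent.pair_iff.mp hxv _ _ hcomb).2
  have hsymm := (isHermitian_iff_isSymm.mp hQ.isHermitian).dotProduct_mulVec_comm_s16 x v
  have hgram : u ⬝ᵥ Q *ᵥ u = a * ((v ⬝ᵥ Q *ᵥ v) * a - b ^ 2) := by
    simp only [u, mulVec_sub, mulVec_smul, sub_dotProduct, dotProduct_sub, smul_dotProduct,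
      dotProduct_smul, smul_eq_mul, hsymm]
    ring
  have hpos := hQ.dotProduct_mulVec_pos_of_mulVec_ne_zero_s16 hu
  rw [hgram] at hpos
  linarith [(pos_iff_pos_of_mul_pos hpos).mp ha]

end Matrix.PosSemidef

theorem div_mul_inv_one_sub_div {K : Type*} [Field K] (m p : K) {a b : K} (ha : a ≠ 0)
    (hb : b ≠ 0) : m / b * (1 - p / (b * a))⁻¹ = m / (b - p / a) := by
  have h : 1 - p / (b * a) = (b - p / a) / b := by field_simp
  rw [h, inv_div, div_mul_div_cancel₀ hb]

theorem stmt16_general {N : ℕ} (Q : Matrix (Fin N) (Fin N) ℝ) (hQ : Q.PosSemidef)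
    (c : Fin N → ℝ)
    (x v : Fin N → ℝ)
    (hnc : LinearIndependent ℝ ![Q.mulVec x, Q.mulVec v]) :
    (v ⬝ᵥ (((c ⬝ᵥ x) / (x ⬝ᵥ Q.mulVec x)) • Q.mulVec x - c)) ^ 2 /
        ((v ⬝ᵥ Q.mulVec v) - (v ⬝ᵥ Q.mulVec x) ^ 2 / (x ⬝ᵥ Q.mulVec x))
      = (v ⬝ᵥ (Q.mulVec (((c ⬝ᵥ x) / (x ⬝ᵥ Q.mulVec x)) • x) - c)) ^ 2 /
          (v ⬝ᵥ Q.mulVec v) *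
        (1 - (v ⬝ᵥ Q.mulVec x) ^ 2 /
          ((v ⬝ᵥ Q.mulVec v) * (x ⬝ᵥ Q.mulVec x)))⁻¹ ∧
    1 ≤ (1 - (v ⬝ᵥ Q.mulVec x) ^ 2 /
          ((v ⬝ᵥ Q.mulVec v) * (x ⬝ᵥ Q.mulVec x)))⁻¹ := by
  have hx : 0 < x ⬝ᵥ Q *ᵥ x := hQ.dotProduct_mulVec_pos_of_mulVec_ne_zero_s16 (hnc.ne_zero 0)
  have hv : 0 < v ⬝ᵥ Q *ᵥ v := hQ.dotProduct_mulVec_pos_of_mulVec_ne_zero_s16 (hnc.ne_zero 1)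
  have hρ : (v ⬝ᵥ Q *ᵥ x) ^ 2 / ((v ⬝ᵥ Q *ᵥ v) * (x ⬝ᵥ Q *ᵥ x)) < 1 :=
    (div_lt_one (by positivity)).mpr (hQ.sq_dotProduct_mulVec_lt hnc)
  refine ⟨by rw [mulVec_smul, div_mul_inv_one_sub_div _ _ hx.ne' hv.ne'], ?_⟩
  rw [one_le_inv₀ (sub_pos.mpr hρ)]
  exact sub_le_self _ (by positivity)

theorem stmt16 {N : ℕ} (Q : Matrix (Fin N) (Fin N) ℝ) (hQ : Q.PosSemidef)
    (α : Fin N → ℝ) (c : Fin N → ℝ) (hc : c = Q.mulVec α) (hc0 : c ≠ 0)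
    (x v : Fin N → ℝ) (hx : 0 < c ⬝ᵥ x)
    (hnc : LinearIndependent ℝ ![Q.mulVec x, Q.mulVec v]) :
    (v ⬝ᵥ (((c ⬝ᵥ x) / (x ⬝ᵥ Q.mulVec x)) • Q.mulVec x - c)) ^ 2 /
        ((v ⬝ᵥ Q.mulVec v) - (v ⬝ᵥ Q.mulVec x) ^ 2 / (x ⬝ᵥ Q.mulVec x))
      = (v ⬝ᵥ (Q.mulVec (((c ⬝ᵥ x) / (x ⬝ᵥ Q.mulVec x)) • x) - c)) ^ 2 /
          (v ⬝ᵥ Q.mulVec v) *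
        (1 - (v ⬝ᵥ Q.mulVec x) ^ 2 /
          ((v ⬝ᵥ Q.mulVec v) * (x ⬝ᵥ Q.mulVec x)))⁻¹ ∧
    1 ≤ (1 - (v ⬝ᵥ Q.mulVec x) ^ 2 /
          ((v ⬝ᵥ Q.mulVec v) * (x ⬝ᵥ Q.mulVec x)))⁻¹ :=
  stmt16_general Q hQ c x v hnc
end

section
/- Suppose Q_{ii} > 0 for all i. For any x ∈ R^N, max over i ∈ [N] of [Qx - c]_i^2 / Q_{ii} ≥ ι_Q · D(x), where ι_Q = λ_min⁺(Q) / (N · max_i Q_{ii}) and λ_min⁺(Q) denotes the smallest nonzero eigenvalue of Q. -/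
open Matrix

/-- Smallest nonzero eigenvalue of `Q`. -/
noncomputable def lamMinPos {N : ℕ} (Q : Matrix (Fin N) (Fin N) ℝ) : ℝ :=
  sInf {μ : ℝ | μ ∈ spectrum ℝ Q ∧ μ ≠ 0}

/-- `ι_Q = λ_min⁺(Q) / (N · max_i Q_{ii})`. -/
noncomputable def iotaQ {N : ℕ} (Q : Matrix (Fin N) (Fin N) ℝ) : ℝ :=
  lamMinPos Q / (N * ⨆ i, Q i i)

/-!
Write `y = x - α`, so that `Qx - c = Qy` and `D(x) = yᵀQy`. Every eigenvalue `μ` of `Q` satisfies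
`μ² - tμ ≥ 0` for `t = λ_min⁺(Q)` (either `μ = 0` or `μ ≥ t`), so `Q² - tQ` is positive semidefinite
and `t · D(x) ≤ ‖Qy‖² = ∑ᵢ (Qy)ᵢ²`. Finally each `(Qy)ᵢ² = Qᵢᵢ · (Qy)ᵢ²/Qᵢᵢ` is at most
`maxᵢ Qᵢᵢ · maxⱼ (Qy)ⱼ²/Qⱼⱼ`, and summing over the `N` coordinates gives the claim.
-/

open scoped MatrixOrder

lemma Dmap_mulVec_eq {N : ℕ} {Q : Matrix (Fin N) (Fin N) ℝ} (hQ : Q.IsSymm) (α x : Fin N → ℝ) :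
    Dmap Q (Q *ᵥ α) α x = (x - α) ⬝ᵥ Q *ᵥ (x - α) := by
  have hswap : ∀ u v : Fin N → ℝ, Q *ᵥ u ⬝ᵥ v = u ⬝ᵥ Q *ᵥ v := fun u v => by
    rw [dotProduct_mulVec, ← mulVec_transpose, hQ.eq, dotProduct_comm]
  simp only [Dmap, mulVec_sub, dotProduct_sub, sub_dotProduct, hswap α x, hswap α α]
  rw [dotProduct_comm α (Q *ᵥ x), hswap]
  ring

lemma lamMinPos_le {N : ℕ} {Q : Matrix (Fin N) (Fin N) ℝ} {μ : ℝ} (hμ : μ ∈ spectrum ℝ Q)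
    (hμ0 : μ ≠ 0) : lamMinPos Q ≤ μ :=
  csInf_le ((Matrix.finite_real_spectrum (A := Q)).subset fun _ h => h.1).bddBelow ⟨hμ, hμ0⟩

lemma Matrix.PosSemidef.mul_self_sub_smul {n : Type*} [Fintype n] [DecidableEq n]
    {Q : Matrix n n ℝ} (hQ : Q.PosSemidef) {t : ℝ} (ht : ∀ μ ∈ spectrum ℝ Q, μ ≠ 0 → t ≤ μ) :
    (Q * Q - t • Q).PosSemidef := by
  have hcfc : cfc (fun μ => μ ^ 2 - t * μ) Q = Q * Q - t • Q := by
    rw [cfc_sub (· ^ 2) (t * ·) Q, cfc_pow_id Q 2, cfc_const_mul_id t Q, sq]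
  rw [← nonneg_iff_posSemidef, ← hcfc]
  refine cfc_nonneg fun μ hμ => ?_
  have hμ_nonneg : 0 ≤ μ := (posSemidef_iff_isHermitian_and_spectrum_nonneg.mp hQ).2 hμ
  rcases eq_or_ne μ 0 with rfl | hμ0
  · simp
  · nlinarith [ht μ hμ hμ0]

lemma Matrix.PosSemidef.lamMinPos_mul_dotProduct_mulVec_le {N : ℕ}
    {Q : Matrix (Fin N) (Fin N) ℝ} (hQ : Q.PosSemidef) (y : Fin N → ℝ) :
    lamMinPos Q * (y ⬝ᵥ Q *ᵥ y) ≤ ∑ i, (Q *ᵥ y) i ^ 2 := by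
  have h := (hQ.mul_self_sub_smul fun μ => lamMinPos_le).dotProduct_mulVec_nonneg y
  have hsq : y ⬝ᵥ (Q * Q) *ᵥ y = ∑ i, (Q *ᵥ y) i ^ 2 := by
    rw [← mulVec_mulVec, dotProduct_mulVec, ← mulVec_transpose,
      (isHermitian_iff_isSymm.mp hQ.isHermitian).eq]
    simp only [dotProduct, sq]
  simp only [sub_mulVec, smul_mulVec, dotProduct_sub, dotProduct_smul, star_trivial,
    smul_eq_mul, hsq] at h
  linarith

lemma sum_le_card_mul_iSup_mul_iSup_div {ι : Type*} [Fintype ι] {f w : ι → ℝ}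
    (hf : ∀ i, 0 ≤ f i) (hw : ∀ i, 0 < w i) :
    ∑ i, f i ≤ Fintype.card ι * ((⨆ i, w i) * ⨆ i, f i / w i) := by
  have hterm : ∀ i, f i ≤ (⨆ i, w i) * ⨆ i, f i / w i := fun i => calc
    f i = w i * (f i / w i) := (mul_div_cancel₀ _ (hw i).ne').symm
    _ ≤ (⨆ i, w i) * ⨆ i, f i / w i :=
      mul_le_mul (le_ciSup (Set.finite_range w).bddAbove i)
        (le_ciSup (Set.finite_range fun i => f i / w i).bddAbove i)
        (div_nonneg (hf i) (hw i).le) (Real.iSup_nonneg fun i => (hw i).le)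
  simpa using Finset.sum_le_sum fun i (_ : i ∈ Finset.univ) => hterm i

theorem stmt18_general {N : ℕ} (Q : Matrix (Fin N) (Fin N) ℝ)
    (hQ : Q.PosSemidef) (hdiag : ∀ i, 0 < Q i i)
    (α : Fin N → ℝ) (c : Fin N → ℝ) (hc : c = Q.mulVec α)
    (x : Fin N → ℝ) :
    iotaQ Q * Dmap Q c α x
      ≤ ⨆ i, ((Q.mulVec x - c) i) ^ 2 / Q i i := by
  subst hc
  have hres : Q *ᵥ x - Q *ᵥ α = Q *ᵥ (x - α) := (mulVec_sub Q x α).symm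
  have hspectral := hQ.lamMinPos_mul_dotProduct_mulVec_le (x - α)
  have hsum := sum_le_card_mul_iSup_mul_iSup_div (fun i => sq_nonneg ((Q *ᵥ (x - α)) i)) hdiag
  rw [Fintype.card_fin] at hsum
  rw [iotaQ, Dmap_mulVec_eq (isHermitian_iff_isSymm.mp hQ.isHermitian), hres, div_mul_eq_mul_div]
  refine div_le_of_le_mul₀ (mul_nonneg N.cast_nonneg (Real.iSup_nonneg fun i => (hdiag i).le))
    (Real.iSup_nonneg fun i => div_nonneg (sq_nonneg _) (hdiag i).le) ?_
  linarith

theorem stmt18 {N : ℕ} [NeZero N] (Q : Matrix (Fin N) (Fin N) ℝ)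
    (hQ : Q.PosSemidef) (hQ0 : Q ≠ 0) (hdiag : ∀ i, 0 < Q i i)
    (α : Fin N → ℝ) (c : Fin N → ℝ) (hc : c = Q.mulVec α)
    (x : Fin N → ℝ) :
    iotaQ Q * Dmap Q c α x
      ≤ ⨆ i, ((Q.mulVec x - c) i) ^ 2 / Q i i :=
  stmt18_general Q hQ hdiag α c hc x
end
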